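/- Let φ, ψ be dual frames for H and m ∈ ℓ^∞ a sequence with finitely many limit points l_1,…,l_j, where ℕ = I_1 ∪ ⋯ ∪ I_j, each I_k infinite, and {m_n : n ∈ I_k} has only l_k as limit point. Define m' by m'_n = l_k for n ∈ I_k. Then M_{m,φ,ψ} − M_{m',φ,ψ} is a compact operator; consequently the essential spectra coincide: σ_e(M_{m,φ,ψ}) = σ_e(M_{m',φ,ψ}). -/

import Mathlib

open scoped InnerProductSpace
open Filter Topology Metric

set_option linter.unusedSectionVars false
set_option linter.unusedVariables false
set_option maxHeartbeats 1600000

section Aux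

variable {H : Type*} [NormedAddCommGroup H] [InnerProductSpace ℂ H] [CompleteSpace H]

/-- Finite synthesis bound from the upper frame bound. -/
lemma synth_bound (φ : ℕ → H) (B : ℝ) (hB : 0 ≤ B)
    (hφ : ∀ f : H, Summable (fun n => ‖⟪φ n, f⟫_ℂ‖ ^ 2) ∧
      ∑' n, ‖⟪φ n, f⟫_ℂ‖ ^ 2 ≤ B * ‖f‖ ^ 2)
    (F : Finset ℕ) (a : ℕ → ℂ) :
    ‖∑ n ∈ F, a n • φ n‖ ^ 2 ≤ B * ∑ n ∈ F, ‖a n‖ ^ 2 := by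
  set S : H := ∑ n ∈ F, a n • φ n with hS
  have hsum : (⟪S, S⟫_ℂ) = ∑ n ∈ F, a n * ⟪S, φ n⟫_ℂ := by
    rw [hS]
    rw [inner_sum]
    exact Finset.sum_congr rfl fun n _ => inner_smul_right _ _ _
  have h1 : ‖S‖ ^ 2 ≤ ∑ n ∈ F, ‖a n‖ * ‖⟪S, φ n⟫_ℂ‖ := by
    calc ‖S‖ ^ 2 = ‖(⟪S, S⟫_ℂ)‖ := by
          rw [inner_self_eq_norm_sq_to_K (𝕜 := ℂ) S]
          simp [norm_pow]
      _ ≤ ∑ n ∈ F, ‖a n * ⟪S, φ n⟫_ℂ‖ := by rw [hsum]; exact norm_sum_le _ _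
      _ = ∑ n ∈ F, ‖a n‖ * ‖⟪S, φ n⟫_ℂ‖ := by simp [norm_mul]
  have h2 : (∑ n ∈ F, ‖a n‖ * ‖⟪S, φ n⟫_ℂ‖) ^ 2 ≤
      (∑ n ∈ F, ‖a n‖ ^ 2) * ∑ n ∈ F, ‖⟪S, φ n⟫_ℂ‖ ^ 2 :=
    Finset.sum_mul_sq_le_sq_mul_sq F _ _
  have h3 : ∑ n ∈ F, ‖⟪S, φ n⟫_ℂ‖ ^ 2 ≤ B * ‖S‖ ^ 2 := by
    calc ∑ n ∈ F, ‖⟪S, φ n⟫_ℂ‖ ^ 2 = ∑ n ∈ F, ‖⟪φ n, S⟫_ℂ‖ ^ 2 :=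
          Finset.sum_congr rfl fun n _ => by rw [norm_inner_symm]
      _ ≤ ∑' n, ‖⟪φ n, S⟫_ℂ‖ ^ 2 := Summable.sum_le_tsum F (fun n _ => by positivity) (hφ S).1
      _ ≤ B * ‖S‖ ^ 2 := (hφ S).2
  have ha : (0:ℝ) ≤ ∑ n ∈ F, ‖a n‖ ^ 2 := Finset.sum_nonneg fun n _ => by positivity
  have hX : (0:ℝ) ≤ ∑ n ∈ F, ‖a n‖ * ‖⟪S, φ n⟫_ℂ‖ :=
    Finset.sum_nonneg fun n _ => mul_nonneg (norm_nonneg _) (norm_nonneg _)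
  rcases eq_or_lt_of_le (norm_nonneg S) with h | h
  · have h0 : ‖S‖ ^ 2 = 0 := by rw [← h]; ring
    rw [h0]; exact mul_nonneg hB ha
  · have hp : 0 < ‖S‖ ^ 2 := by positivity
    have h4 : ‖S‖ ^ 2 * ‖S‖ ^ 2 ≤ (B * ∑ n ∈ F, ‖a n‖ ^ 2) * ‖S‖ ^ 2 := by
      nlinarith [mul_le_mul h1 h1 (sq_nonneg ‖S‖) hX, h2, h3, ha]
    exact le_of_mul_le_mul_right h4 hp

lemma synth_summable (φ : ℕ → H) (B : ℝ) (hB : 0 ≤ B)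
    (hφ : ∀ f : H, Summable (fun n => ‖⟪φ n, f⟫_ℂ‖ ^ 2) ∧
      ∑' n, ‖⟪φ n, f⟫_ℂ‖ ^ 2 ≤ B * ‖f‖ ^ 2)
    (a : ℕ → ℂ) (ha : Summable (fun n => ‖a n‖ ^ 2)) :
    Summable (fun n => a n • φ n) := by
  rw [summable_iff_vanishing_norm]
  intro ε hε
  obtain ⟨s, hs⟩ := summable_iff_vanishing_norm.1 ha (ε ^ 2 / (B + 1)) (by positivity)
  refine ⟨s, fun t ht => ?_⟩
  have h1 : ‖∑ n ∈ t, a n • φ n‖ ^ 2 ≤ B * ∑ n ∈ t, ‖a n‖ ^ 2 :=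
    synth_bound φ B hB hφ t a
  have h2 : ∑ n ∈ t, ‖a n‖ ^ 2 < ε ^ 2 / (B + 1) := by
    have := hs t ht
    calc ∑ n ∈ t, ‖a n‖ ^ 2 ≤ ‖∑ n ∈ t, ‖a n‖ ^ 2‖ := le_abs_self _
      _ < ε ^ 2 / (B + 1) := this
  have h3 : ‖∑ n ∈ t, a n • φ n‖ ^ 2 < ε ^ 2 := by
    have : B * ∑ n ∈ t, ‖a n‖ ^ 2 ≤ (B + 1) * ∑ n ∈ t, ‖a n‖ ^ 2 := by
      have : (0:ℝ) ≤ ∑ n ∈ t, ‖a n‖ ^ 2 := Finset.sum_nonneg fun n _ => by positivity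
      nlinarith
    have h4 : (B + 1) * ∑ n ∈ t, ‖a n‖ ^ 2 < (B + 1) * (ε ^ 2 / (B + 1)) := by
      apply mul_lt_mul_of_pos_left h2 (by linarith)
    have h5 : (B + 1) * (ε ^ 2 / (B + 1)) = ε ^ 2 := by field_simp
    linarith
  exact lt_of_pow_lt_pow_left₀ 2 hε.le h3

lemma synth_norm_bound (φ : ℕ → H) (B : ℝ) (hB : 0 ≤ B)
    (hφ : ∀ f : H, Summable (fun n => ‖⟪φ n, f⟫_ℂ‖ ^ 2) ∧
      ∑' n, ‖⟪φ n, f⟫_ℂ‖ ^ 2 ≤ B * ‖f‖ ^ 2)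
    (a : ℕ → ℂ) (ha : Summable (fun n => ‖a n‖ ^ 2)) (S : H)
    (hS : HasSum (fun n => a n • φ n) S) :
    ‖S‖ ^ 2 ≤ B * ∑' n, ‖a n‖ ^ 2 := by
  have htd : Tendsto (fun F : Finset ℕ => ‖∑ n ∈ F, a n • φ n‖ ^ 2) atTop (𝓝 (‖S‖ ^ 2)) :=
    ((continuous_norm.pow 2).tendsto S).comp hS
  refine le_of_tendsto htd (Filter.Eventually.of_forall fun F => ?_)
  calc ‖∑ n ∈ F, a n • φ n‖ ^ 2 ≤ B * ∑ n ∈ F, ‖a n‖ ^ 2 := synth_bound φ B hB hφ F a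
    _ ≤ B * ∑' n, ‖a n‖ ^ 2 :=
      mul_le_mul_of_nonneg_left (Summable.sum_le_tsum F (fun n _ => by positivity) ha) hB

lemma compact_of_range_le (T : H →L[ℂ] H) (V : Submodule ℂ H) [FiniteDimensional ℂ V]
    (h : ∀ x, T x ∈ V) : IsCompactOperator ⇑T := by
  refine ⟨(↑) '' (closedBall (0 : V) ‖T‖), ?_, ?_⟩
  · exact (ProperSpace.isCompact_closedBall _ _).image continuous_subtype_val
  · refine Filter.mem_of_superset (closedBall_mem_nhds 0 one_pos) fun x hx => ?_
    refine ⟨⟨T x, h x⟩, ?_, rfl⟩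
    rw [mem_closedBall, dist_zero_right]
    calc ‖(⟨T x, h x⟩ : V)‖ = ‖T x‖ := rfl
      _ ≤ ‖T‖ * ‖x‖ := T.le_opNorm x
      _ ≤ ‖T‖ * 1 := by
          refine mul_le_mul_of_nonneg_left ?_ (norm_nonneg T)
          simpa [dist_zero_right] using hx
      _ = ‖T‖ := mul_one _

lemma multiplier_compact (φ ψ : ℕ → H) (Bφ Bψ : ℝ) (hBφ : 0 ≤ Bφ) (hBψ : 0 ≤ Bψ)
    (hφ : ∀ f : H, Summable (fun n => ‖⟪φ n, f⟫_ℂ‖ ^ 2) ∧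
      ∑' n, ‖⟪φ n, f⟫_ℂ‖ ^ 2 ≤ Bφ * ‖f‖ ^ 2)
    (hψ : ∀ f : H, Summable (fun n => ‖⟪ψ n, f⟫_ℂ‖ ^ 2) ∧
      ∑' n, ‖⟪ψ n, f⟫_ℂ‖ ^ 2 ≤ Bψ * ‖f‖ ^ 2)
    (c : ℕ → ℂ) (hc : Tendsto c atTop (𝓝 0))
    (D : H →L[ℂ] H) (hD : ∀ f : H, HasSum (fun n => c n • ⟪ψ n, f⟫_ℂ • φ n) (D f)) :
    IsCompactOperator ⇑D := by
  have hclosed : IsClosed {T : H →L[ℂ] H | IsCompactOperator ⇑T} :=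
    isClosed_setOf_isCompactOperator
  suffices hmem : D ∈ closure {T : H →L[ℂ] H | IsCompactOperator ⇑T} by
    exact hclosed.closure_subset hmem
  rw [Metric.mem_closure_iff]
  intro ε hε
  set s : ℝ := Real.sqrt (Bφ * Bψ) with hs
  have hs0 : 0 ≤ s := Real.sqrt_nonneg _
  set δ : ℝ := ε / (s + 1) with hδdef
  have hδ : 0 < δ := by positivity
  obtain ⟨N, hN⟩ : ∃ N : ℕ, ∀ n ≥ N, ‖c n‖ < δ := by
    have := (Metric.tendsto_atTop.1 hc) δ hδ
    simpa [dist_zero_right] using this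
  set F : H →L[ℂ] H :=
    ∑ n ∈ Finset.range N, c n • ((innerSL ℂ (ψ n)).smulRight (φ n)) with hF
  have hFapp : ∀ f : H, F f = ∑ n ∈ Finset.range N, c n • ⟪ψ n, f⟫_ℂ • φ n := by
    intro f
    rw [hF]
    simp [ContinuousLinearMap.sum_apply]
  refine ⟨F, ?_, ?_⟩
  · -- F is a compact operator
    have : FiniteDimensional ℂ (Submodule.span ℂ (φ '' (Set.Iio N))) :=
      FiniteDimensional.span_of_finite ℂ ((Set.finite_Iio N).image φ)
    refine compact_of_range_le F (Submodule.span ℂ (φ '' (Set.Iio N))) fun f => ?_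
    rw [hFapp f]
    refine Submodule.sum_mem _ fun n hn => ?_
    refine Submodule.smul_mem _ _ (Submodule.smul_mem _ _ ?_)
    exact Submodule.subset_span ⟨n, Finset.mem_range.1 hn, rfl⟩
  · -- distance estimate
    rw [dist_eq_norm]
    have hbound : ∀ f : H, ‖(D - F) f‖ ≤ (s * δ) * ‖f‖ := by
      intro f
      set a : ℕ → ℂ := fun n => if n < N then 0 else c n * ⟪ψ n, f⟫_ℂ with ha
      have hasum : HasSum (fun n => a n • φ n) ((D - F) f) := by
        have hz : ∀ b ∉ Finset.range N,
            (if b < N then c b • ⟪ψ b, f⟫_ℂ • φ b else 0) = 0 := by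
          intro b hb
          rw [if_neg (by simpa using hb)]
        have hg : HasSum (fun n => if n < N then c n • ⟪ψ n, f⟫_ℂ • φ n else 0) (F f) := by
          have h0 : ∑ b ∈ Finset.range N,
              (if b < N then c b • ⟪ψ b, f⟫_ℂ • φ b else 0) = F f := by
            rw [hFapp f]
            exact Finset.sum_congr rfl fun b hb => if_pos (Finset.mem_range.1 hb)
          exact h0 ▸ hasSum_sum_of_ne_finset_zero hz
        have hsub := (hD f).sub hg
        have heq : (fun n => c n • ⟪ψ n, f⟫_ℂ • φ n -
            (if n < N then c n • ⟪ψ n, f⟫_ℂ • φ n else 0)) = fun n => a n • φ n := by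
          funext n
          by_cases hn : n < N
          · simp [ha, hn]
          · simp [ha, hn, smul_smul]
        rw [heq] at hsub
        simpa using hsub
      have hale : ∀ n, ‖a n‖ ^ 2 ≤ δ ^ 2 * ‖⟪ψ n, f⟫_ℂ‖ ^ 2 := by
        intro n
        by_cases hn : n < N
        · simp [ha, hn]
          positivity
        · have hcn : ‖c n‖ ≤ δ := (hN n (not_lt.1 hn)).le
          simp only [ha, if_neg hn, norm_mul, mul_pow]
          have : ‖c n‖ ^ 2 ≤ δ ^ 2 := pow_le_pow_left₀ (norm_nonneg _) hcn 2
          nlinarith [sq_nonneg ‖⟪ψ n, f⟫_ℂ‖, norm_nonneg (⟪ψ n, f⟫_ℂ)]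
      have hsummable : Summable fun n => ‖a n‖ ^ 2 :=
        Summable.of_nonneg_of_le (fun n => by positivity) hale (((hψ f).1).mul_left (δ ^ 2))
      have h1 : ‖(D - F) f‖ ^ 2 ≤ Bφ * ∑' n, ‖a n‖ ^ 2 :=
        synth_norm_bound φ Bφ hBφ hφ a hsummable _ hasum
      have h2 : ∑' n, ‖a n‖ ^ 2 ≤ δ ^ 2 * (Bψ * ‖f‖ ^ 2) := by
        calc ∑' n, ‖a n‖ ^ 2 ≤ ∑' n, δ ^ 2 * ‖⟪ψ n, f⟫_ℂ‖ ^ 2 :=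
              Summable.tsum_le_tsum hale hsummable (((hψ f).1).mul_left (δ ^ 2))
          _ = δ ^ 2 * ∑' n, ‖⟪ψ n, f⟫_ℂ‖ ^ 2 := tsum_mul_left
          _ ≤ δ ^ 2 * (Bψ * ‖f‖ ^ 2) := mul_le_mul_of_nonneg_left (hψ f).2 (by positivity)
      refine le_of_sq_le_sq ?_ (by positivity)
      have hss : s ^ 2 = Bφ * Bψ := Real.sq_sqrt (by positivity)
      calc ‖(D - F) f‖ ^ 2 ≤ Bφ * (δ ^ 2 * (Bψ * ‖f‖ ^ 2)) := by
            refine h1.trans (mul_le_mul_of_nonneg_left h2 hBφ)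
        _ = (s * δ * ‖f‖) ^ 2 := by rw [mul_pow, mul_pow, hss]; ring
    have hop : ‖D - F‖ ≤ s * δ :=
      ContinuousLinearMap.opNorm_le_bound _ (by positivity) hbound
    have hsd : (s + 1) * δ = ε := by
      rw [hδdef]; field_simp
    have : s * δ < ε := by nlinarith
    linarith

lemma bounded_below_of_closed_range (T : H →L[ℂ] H) (hR : IsClosed (Set.range ⇑T)) :
    ∃ C : ℝ, 0 ≤ C ∧ ∀ w ∈ (LinearMap.ker (T : H →ₗ[ℂ] H))ᗮ, ‖w‖ ≤ C * ‖T w‖ := by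
  set K : Submodule ℂ H := LinearMap.ker (T : H →ₗ[ℂ] H) with hK
  set R : Submodule ℂ H := LinearMap.range (T : H →ₗ[ℂ] H) with hRdef
  have hRc : IsClosed (R : Set H) := by
    rw [hRdef]
    exact (LinearMap.coe_range (T : H →ₗ[ℂ] H)) ▸ hR
  haveI : CompleteSpace R := hRc.completeSpace_coe
  haveI : CompleteSpace (Kᗮ : Submodule ℂ H) := (Submodule.isClosed_orthogonal K).completeSpace_coe
  haveI : CompleteSpace K := (ContinuousLinearMap.isClosed_ker T).completeSpace_coe
  set T₂ : (Kᗮ : Submodule ℂ H) →L[ℂ] R :=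
    (T.comp (Submodule.subtypeL Kᗮ)).codRestrict R
      (fun x => LinearMap.mem_range.2 ⟨x, rfl⟩) with hT₂
  have hT₂app : ∀ x : Kᗮ, ((T₂ x : H)) = T x := fun x => rfl
  have hinj : LinearMap.ker (T₂ : (Kᗮ : Submodule ℂ H) →ₗ[ℂ] R) = ⊥ := by
    rw [Submodule.eq_bot_iff]
    rintro x hx
    have hx0 : T (x : H) = 0 := by
      have := congrArg (Subtype.val) (LinearMap.mem_ker.1 hx)
      simpa [hT₂app] using this
    have hxK : (x : H) ∈ K := LinearMap.mem_ker.2 hx0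
    have : (x : H) ∈ K ⊓ Kᗮ := ⟨hxK, x.2⟩
    rw [Submodule.inf_orthogonal_eq_bot] at this
    exact Subtype.ext (by simpa using this)
  have hsurj : LinearMap.range (T₂ : (Kᗮ : Submodule ℂ H) →ₗ[ℂ] R) = ⊤ := by
    rw [Submodule.eq_top_iff']
    rintro ⟨y, hy⟩
    obtain ⟨v, hv⟩ := LinearMap.mem_range.1 hy
    obtain ⟨k, hk, w, hw, hvw⟩ := Submodule.exists_add_mem_mem_orthogonal (K := K) v
    refine ⟨⟨w, hw⟩, ?_⟩
    apply Subtype.ext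
    have : T w = y := by
      have hTk : T k = 0 := LinearMap.mem_ker.1 hk
      calc T w = T (k + w) - T k := by rw [map_add]; abel
        _ = T v - 0 := by rw [← hvw, hTk]
        _ = y := by rw [sub_zero]; exact hv
    simpa [hT₂app] using this
  set e := ContinuousLinearEquiv.ofBijective T₂ hinj hsurj with he
  refine ⟨‖(e.symm : R →L[ℂ] (Kᗮ : Submodule ℂ H))‖, norm_nonneg _, ?_⟩
  intro w hw
  have h1 : (⟨w, hw⟩ : Kᗮ) = e.symm (e ⟨w, hw⟩) := (e.symm_apply_apply _).symm
  have h2 : ‖(⟨w, hw⟩ : Kᗮ)‖ ≤ ‖(e.symm : R →L[ℂ] (Kᗮ : Submodule ℂ H))‖ * ‖e ⟨w, hw⟩‖ := by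
    conv_lhs => rw [h1]
    exact (e.symm : R →L[ℂ] (Kᗮ : Submodule ℂ H)).le_opNorm _
  have h3 : ‖e ⟨w, hw⟩‖ = ‖T w‖ := by
    have : e ⟨w, hw⟩ = T₂ ⟨w, hw⟩ := rfl
    rw [this]
    rfl
  rw [h3] at h2
  exact h2

/-- Sequential characterization of left semi-Fredholm operators. -/
def SeqP (T : H →L[ℂ] H) : Prop :=
  ∀ x : ℕ → H, (∃ C : ℝ, ∀ n, ‖x n‖ ≤ C) → ∀ y : H,
    Tendsto (fun n => T (x n)) atTop (𝓝 y) →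
    ∃ g : ℕ → ℕ, StrictMono g ∧ ∃ z : H, Tendsto (fun n => x (g n)) atTop (𝓝 z)

lemma seqP_add_compact (T K : H →L[ℂ] H) (hK : IsCompactOperator ⇑K) (hT : SeqP T) :
    SeqP (T + K) := by
  intro x hx y hy
  obtain ⟨C, hC⟩ := hx
  have hC0 : 0 ≤ C := le_trans (norm_nonneg _) (hC 0)
  have hxball : ∀ n, x n ∈ closedBall (0 : H) C := fun n => by
    simpa [dist_zero_right] using hC n
  have hcomp : IsCompact (closure (⇑K '' closedBall (0 : H) C)) :=
    hK.isCompact_closure_image_of_bounded (isBounded_closedBall)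
  have hmem : ∀ n, K (x n) ∈ closure (⇑K '' closedBall (0 : H) C) := fun n =>
    subset_closure ⟨x n, hxball n, rfl⟩
  obtain ⟨w, -, g, hg, hgw⟩ := hcomp.tendsto_subseq hmem
  have hTg : Tendsto (fun n => T (x (g n))) atTop (𝓝 (y - w)) := by
    have h1 : Tendsto (fun n => (T + K) (x (g n))) atTop (𝓝 y) :=
      hy.comp hg.tendsto_atTop
    have h2 : (fun n => T (x (g n))) = fun n => (T + K) (x (g n)) - K (x (g n)) := by
      funext n; simp
    rw [h2]
    exact h1.sub hgw
  obtain ⟨g', hg', z, hz⟩ := hT (fun n => x (g n)) ⟨C, fun n => hC _⟩ (y - w) hTg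
  exact ⟨g ∘ g', hg.comp hg', z, hz⟩

lemma seqP_of_closed_findim (T : H →L[ℂ] H) (hR : IsClosed (Set.range ⇑T))
    (hker : FiniteDimensional ℂ (LinearMap.ker (T : H →ₗ[ℂ] H))) : SeqP T := by
  classical
  set Km : Submodule ℂ H := LinearMap.ker (T : H →ₗ[ℂ] H) with hKm
  haveI : CompleteSpace Km := (ContinuousLinearMap.isClosed_ker T).completeSpace_coe
  haveI : FiniteDimensional ℂ Km := hker
  haveI : ProperSpace Km := FiniteDimensional.proper ℂ Km
  obtain ⟨C0, hC00, hC0⟩ := bounded_below_of_closed_range T hR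
  intro x hx y hy
  obtain ⟨C, hC⟩ := hx
  have hC0' : 0 ≤ C := le_trans (norm_nonneg _) (hC 0)
  set k : ℕ → Km := fun n => Submodule.orthogonalProjection Km (x n) with hk
  set w : ℕ → H := fun n => x n - ↑(k n) with hw
  have hwmem : ∀ n, w n ∈ Kmᗮ := fun n => Submodule.sub_starProjection_mem_orthogonal (K := Km) (x n)
  have hTw : ∀ n, T (w n) = T (x n) := by
    intro n
    have : T ((k n : H)) = 0 := (k n).2
    simp [hw, map_sub, this]
  -- w is Cauchy
  have hTc : CauchySeq (fun n => T (x n)) := hy.cauchySeq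
  have hwc : CauchySeq w := by
    rw [Metric.cauchySeq_iff]
    intro ε hε
    obtain ⟨N, hN⟩ := Metric.cauchySeq_iff.1 hTc (ε / (C0 + 1)) (by positivity)
    refine ⟨N, fun p hp q hq => ?_⟩
    have h1 : w p - w q ∈ Kmᗮ := Submodule.sub_mem _ (hwmem p) (hwmem q)
    have h2 : ‖w p - w q‖ ≤ C0 * ‖T (w p - w q)‖ := hC0 _ h1
    have h3 : T (w p - w q) = T (x p) - T (x q) := by
      rw [map_sub, hTw, hTw]
    rw [dist_eq_norm]
    rw [h3] at h2
    have h4 : ‖T (x p) - T (x q)‖ < ε / (C0 + 1) := by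
      rw [← dist_eq_norm]; exact hN p hp q hq
    have h5 : (C0 + 1) * (ε / (C0 + 1)) = ε := by field_simp
    nlinarith [norm_nonneg (T (x p) - T (x q))]
  obtain ⟨wl, hwl⟩ := cauchySeq_tendsto_of_complete hwc
  -- k is a bounded sequence in a finite dimensional space
  have hkb : ∀ n, k n ∈ closedBall (0 : Km) C := by
    intro n
    rw [mem_closedBall, dist_zero_right]
    calc ‖k n‖ ≤ ‖x n‖ := by
          simpa only [one_mul] using
            (Submodule.orthogonalProjection Km).le_of_opNorm_le (Submodule.orthogonalProjection_norm_le Km) (x n)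
      _ ≤ C := hC n
  obtain ⟨κ, -, g, hg, hgκ⟩ := (isCompact_closedBall (0 : Km) C).tendsto_subseq hkb
  refine ⟨g, hg, (κ : H) + wl, ?_⟩
  have h1 : Tendsto (fun n => ((k (g n) : H))) atTop (𝓝 (κ : H)) :=
    (continuous_subtype_val.tendsto κ).comp hgκ
  have h2 : Tendsto (fun n => w (g n)) atTop (𝓝 wl) := hwl.comp hg.tendsto_atTop
  have h3 : (fun n => x (g n)) = fun n => ((k (g n) : H)) + w (g n) := by
    funext n; simp [hw]
  rw [h3]
  exact h1.add h2

lemma findim_ker_of_seqP (T : H →L[ℂ] H) (hP : SeqP T) :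
    FiniteDimensional ℂ (LinearMap.ker (T : H →ₗ[ℂ] H)) := by
  set Km : Submodule ℂ H := LinearMap.ker (T : H →ₗ[ℂ] H) with hKm
  have hKc : IsClosed (Km : Set H) := ContinuousLinearMap.isClosed_ker T
  have hseq : IsSeqCompact (closedBall (0 : Km) 1) := by
    intro u hu
    have hub : ∀ n, ‖(u n : H)‖ ≤ 1 := by
      intro n
      have := hu n
      rw [mem_closedBall, dist_zero_right] at this
      exact this
    have hT0 : Tendsto (fun n => T ((u n : H))) atTop (𝓝 0) := by
      have : ∀ n, T ((u n : H)) = 0 := fun n => (u n).2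
      simp only [this]
      exact tendsto_const_nhds
    obtain ⟨g, hg, z, hz⟩ := hP (fun n => (u n : H)) ⟨1, hub⟩ 0 hT0
    have hzK : z ∈ Km := hKc.mem_of_tendsto hz (Eventually.of_forall fun n => (u (g n)).2)
    have hzn : ‖z‖ ≤ 1 := by
      refine le_of_tendsto (hz.norm) (Eventually.of_forall fun n => hub (g n))
    refine ⟨⟨z, hzK⟩, ?_, g, hg, ?_⟩
    · rw [mem_closedBall, dist_zero_right]; exact hzn
    · exact tendsto_subtype_rng.2 hz
  have hcomp : IsCompact (closedBall (0 : Km) 1) := hseq.isCompact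
  exact FiniteDimensional.of_isCompact_closedBall₀ (𝕜 := ℂ) one_pos hcomp

lemma closed_range_of_seqP (T : H →L[ℂ] H) (hP : SeqP T) :
    IsClosed (Set.range ⇑T) := by
  set Km : Submodule ℂ H := LinearMap.ker (T : H →ₗ[ℂ] H) with hKm
  haveI : CompleteSpace Km := (ContinuousLinearMap.isClosed_ker T).completeSpace_coe
  -- T is bounded below on the orthogonal complement of its kernel
  have hbb : ∃ c : ℝ, 0 ≤ c ∧ ∀ w ∈ Kmᗮ, ‖w‖ ≤ c * ‖T w‖ := by
    by_contra hcon
    push_neg at hcon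
    have hex : ∀ n : ℕ, ∃ w ∈ Kmᗮ, ((n : ℝ) + 1) * ‖T w‖ < ‖w‖ := by
      intro n
      obtain ⟨w, hw, hlt⟩ := hcon ((n : ℝ) + 1) (by positivity)
      exact ⟨w, hw, hlt⟩
    choose w hwmem hwlt using hex
    have hwne : ∀ n, w n ≠ 0 := by
      intro n hn
      have := hwlt n
      rw [hn] at this
      simp at this
    set u : ℕ → H := fun n => (‖w n‖)⁻¹ • w n with hu
    have hun : ∀ n, ‖u n‖ = 1 := fun n => by
      rw [hu]
      simp [norm_smul, abs_of_nonneg, inv_mul_cancel₀ (norm_ne_zero_iff.2 (hwne n))]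
    have humem : ∀ n, u n ∈ Kmᗮ := fun n =>
      Submodule.smul_mem _ _ (hwmem n)
    have hTu : Tendsto (fun n => T (u n)) atTop (𝓝 0) := by
      have hb : ∀ n : ℕ, ‖T (u n)‖ ≤ ((n : ℝ) + 1)⁻¹ := by
        intro n
        have hwpos : 0 < ‖w n‖ := norm_pos_iff.2 (hwne n)
        have hkey : ‖T (w n)‖ * ((n:ℝ) + 1) ≤ ‖w n‖ := by nlinarith [hwlt n]
        have h1 : T (u n) = (‖w n‖)⁻¹ • T (w n) := by rw [hu]; simp
        rw [h1, norm_smul]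
        simp only [norm_inv, norm_norm]
        rw [inv_mul_le_iff₀ hwpos, ← div_eq_mul_inv, le_div_iff₀ (by positivity)]
        exact hkey
      have hb2 : Tendsto (fun n : ℕ => ((n : ℝ) + 1)⁻¹) atTop (𝓝 0) :=
        tendsto_inv_atTop_zero.comp
          (tendsto_atTop_add_const_right atTop 1 tendsto_natCast_atTop_atTop)
      exact squeeze_zero_norm hb hb2
    obtain ⟨g, hg, z, hz⟩ := hP u ⟨1, fun n => (hun n).le⟩ 0 hTu
    have hzmem : z ∈ Kmᗮ :=
      (Submodule.isClosed_orthogonal Km).mem_of_tendsto hz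
        (Eventually.of_forall fun n => humem (g n))
    have hTz : T z = 0 := by
      have h1 : Tendsto (fun n => T (u (g n))) atTop (𝓝 (T z)) :=
        (T.continuous.tendsto z).comp hz
      have h2 : Tendsto (fun n => T (u (g n))) atTop (𝓝 0) :=
        hTu.comp hg.tendsto_atTop
      exact tendsto_nhds_unique h1 h2
    have hzK : z ∈ Km := LinearMap.mem_ker.2 hTz
    have hz0 : z = 0 := by
      have : z ∈ Km ⊓ Kmᗮ := ⟨hzK, hzmem⟩
      rwa [Submodule.inf_orthogonal_eq_bot, Submodule.mem_bot] at this
    have : Tendsto (fun n => ‖u (g n)‖) atTop (𝓝 ‖z‖) := hz.norm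
    rw [hz0, norm_zero] at this
    have h1 : Tendsto (fun _ : ℕ => (1:ℝ)) atTop (𝓝 0) := by
      refine this.congr fun n => hun (g n)
    exact absurd (tendsto_nhds_unique h1 tendsto_const_nhds) zero_ne_one
  obtain ⟨c, hc0, hc⟩ := hbb
  -- range T = image of the orthogonal complement
  have himg : Set.range ⇑T = ⇑T '' (Kmᗮ : Set H) := by
    apply Set.Subset.antisymm
    · rintro y ⟨v, rfl⟩
      obtain ⟨k, hk, w, hw, hvw⟩ := Submodule.exists_add_mem_mem_orthogonal (K := Km) v
      refine ⟨w, hw, ?_⟩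
      have hTk : T k = 0 := LinearMap.mem_ker.1 hk
      have : T v = T w := by rw [hvw, map_add, hTk, zero_add]
      exact this.symm
    · rintro y ⟨w, -, rfl⟩
      exact ⟨w, rfl⟩
  rw [himg]
  apply IsSeqClosed.isClosed
  intro yv y hyv hyl
  choose wv hwvmem hwveq using hyv
  have hwc : CauchySeq wv := by
    rw [Metric.cauchySeq_iff]
    intro ε hε
    obtain ⟨N, hN⟩ := Metric.cauchySeq_iff.1 hyl.cauchySeq (ε / (c + 1)) (by positivity)
    refine ⟨N, fun p hp q hq => ?_⟩
    have h1 : wv p - wv q ∈ Kmᗮ := Submodule.sub_mem _ (hwvmem p) (hwvmem q)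
    have h2 : ‖wv p - wv q‖ ≤ c * ‖T (wv p - wv q)‖ := hc _ h1
    have h3 : T (wv p - wv q) = yv p - yv q := by
      rw [map_sub, hwveq, hwveq]
    rw [h3] at h2
    have h4 : ‖yv p - yv q‖ < ε / (c + 1) := by
      rw [← dist_eq_norm]; exact hN p hp q hq
    have h5 : (c + 1) * (ε / (c + 1)) = ε := by field_simp
    rw [dist_eq_norm]
    nlinarith [norm_nonneg (yv p - yv q)]
  obtain ⟨wl, hwl⟩ := cauchySeq_tendsto_of_complete hwc
  have hwlmem : wl ∈ Kmᗮ :=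
    (Submodule.isClosed_orthogonal Km).mem_of_tendsto hwl
      (Eventually.of_forall fun n => hwvmem n)
  refine ⟨wl, hwlmem, ?_⟩
  have h1 : Tendsto (fun n => T (wv n)) atTop (𝓝 (T wl)) :=
    (T.continuous.tendsto wl).comp hwl
  have h2 : Tendsto (fun n => T (wv n)) atTop (𝓝 y) := by
    refine hyl.congr fun n => (hwveq n).symm
  exact tendsto_nhds_unique h1 h2

lemma ker_adjoint_eq (T : H →L[ℂ] H) :
    LinearMap.ker ((ContinuousLinearMap.adjoint T : H →L[ℂ] H) : H →ₗ[ℂ] H) = (LinearMap.range (T : H →ₗ[ℂ] H))ᗮ := by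
  ext x
  rw [LinearMap.mem_ker, Submodule.mem_orthogonal]
  constructor
  · intro h u hu
    obtain ⟨y, rfl⟩ := LinearMap.mem_range.1 hu
    have h1 : ⟪(ContinuousLinearMap.adjoint T) x, y⟫_ℂ = (0:ℂ) := by rw [show (ContinuousLinearMap.adjoint T) x = 0 from h]; simp
    rw [ContinuousLinearMap.adjoint_inner_left] at h1
    calc ⟪T y, x⟫_ℂ = (starRingEnd ℂ) ⟪x, T y⟫_ℂ := (inner_conj_symm _ _).symm
      _ = 0 := by rw [h1]; simp
  · intro h
    have h1 : ⟪(ContinuousLinearMap.adjoint T) x, (ContinuousLinearMap.adjoint T) x⟫_ℂ = 0 := by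
      rw [ContinuousLinearMap.adjoint_inner_left]
      have h2 : ⟪T ((ContinuousLinearMap.adjoint T) x), x⟫_ℂ = 0 :=
        h _ (LinearMap.mem_range.2 ⟨_, rfl⟩)
      calc ⟪x, T ((ContinuousLinearMap.adjoint T) x)⟫_ℂ
          = (starRingEnd ℂ) ⟪T ((ContinuousLinearMap.adjoint T) x), x⟫_ℂ :=
            (inner_conj_symm _ _).symm
        _ = 0 := by rw [h2]; simp
    exact inner_self_eq_zero.1 h1

lemma adjoint_closed_range (T : H →L[ℂ] H) (hR : IsClosed (Set.range ⇑T)) :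
    IsClosed (Set.range ⇑(ContinuousLinearMap.adjoint T)) := by
  set Td := ContinuousLinearMap.adjoint T with hTd
  set R : Submodule ℂ H := LinearMap.range (T : H →ₗ[ℂ] H) with hRdef
  have hRc : IsClosed (R : Set H) := by
    rw [hRdef]
    exact (LinearMap.coe_range (T : H →ₗ[ℂ] H)) ▸ hR
  haveI : CompleteSpace R := hRc.completeSpace_coe
  haveI : CompleteSpace (LinearMap.ker (T : H →ₗ[ℂ] H)) := (ContinuousLinearMap.isClosed_ker T).completeSpace_coe
  obtain ⟨C, hC0, hC⟩ := bounded_below_of_closed_range T hR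
  have hkill : ∀ v ∈ Rᗮ, Td v = 0 := by
    intro v hv
    have h1 : ⟪Td v, Td v⟫_ℂ = 0 := by
      rw [hTd, ContinuousLinearMap.adjoint_inner_left]
      have h2 : ⟪T (Td v), v⟫_ℂ = 0 :=
        (Submodule.mem_orthogonal R v).1 hv _ (LinearMap.mem_range.2 ⟨_, rfl⟩)
      calc ⟪v, T (Td v)⟫_ℂ = (starRingEnd ℂ) ⟪T (Td v), v⟫_ℂ := (inner_conj_symm _ _).symm
        _ = 0 := by rw [h2]; simp
    exact inner_self_eq_zero.1 h1
  have hbb2 : ∀ w ∈ (LinearMap.ker (T : H →ₗ[ℂ] H))ᗮ, ‖w‖ ≤ C ^ 2 * ‖Td (T w)‖ := by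
    intro w hw
    have h1 : ‖w‖ ≤ C * ‖T w‖ := hC w hw
    have h2 : ‖T w‖ ^ 2 ≤ ‖Td (T w)‖ * ‖w‖ := by
      have key : ⟪Td (T w), w⟫_ℂ = ⟪T w, T w⟫_ℂ := by
        rw [hTd, ContinuousLinearMap.adjoint_inner_left]
      have h3 : ‖⟪T w, T w⟫_ℂ‖ = ‖T w‖ ^ 2 := by
        rw [inner_self_eq_norm_sq_to_K (𝕜 := ℂ)]
        simp [norm_pow]
      calc ‖T w‖ ^ 2 = ‖⟪Td (T w), w⟫_ℂ‖ := by rw [key, h3]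
        _ ≤ ‖Td (T w)‖ * ‖w‖ := norm_inner_le_norm _ _
    rcases eq_or_lt_of_le (norm_nonneg w) with h | h
    · rw [← h]; positivity
    · nlinarith [norm_nonneg (T w), norm_nonneg (Td (T w))]
  apply IsSeqClosed.isClosed
  intro zv z hzv hzl
  -- write each zv n as Td (T (x n)) with x n ∈ (ker T)ᗮ
  have hx : ∀ n, ∃ x ∈ (LinearMap.ker (T : H →ₗ[ℂ] H))ᗮ, Td (T x) = zv n := by
    intro n
    obtain ⟨y, hy⟩ := hzv n
    set q : H := (Submodule.orthogonalProjection R y : H) with hq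
    have hmem : q ∈ R := (Submodule.orthogonalProjection R y).2
    have hperp : y - q ∈ Rᗮ := Submodule.sub_starProjection_mem_orthogonal (K := R) y
    obtain ⟨v, hv⟩ := LinearMap.mem_range.1 hmem
    obtain ⟨k, hk, x, hxmem, hvx⟩ :=
      Submodule.exists_add_mem_mem_orthogonal (K := LinearMap.ker (T : H →ₗ[ℂ] H)) v
    refine ⟨x, hxmem, ?_⟩
    have hTx : T x = q := by
      have hTk : T k = 0 := LinearMap.mem_ker.1 hk
      have : T v = T x := by rw [hvx, map_add, hTk, zero_add]
      rw [← this]; exact hv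
    rw [hTx]
    have : Td y = Td q + Td (y - q) := by rw [← map_add]; congr 1; abel
    rw [hkill _ hperp, add_zero] at this
    rw [← this, hy]
  choose x hxmem hxeq using hx
  have hxc : CauchySeq x := by
    rw [Metric.cauchySeq_iff]
    intro ε hε
    obtain ⟨N, hN⟩ := Metric.cauchySeq_iff.1 hzl.cauchySeq (ε / (C ^ 2 + 1)) (by positivity)
    refine ⟨N, fun p hp q hq => ?_⟩
    have h1 : x p - x q ∈ (LinearMap.ker (T : H →ₗ[ℂ] H))ᗮ := Submodule.sub_mem _ (hxmem p) (hxmem q)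
    have h2 : ‖x p - x q‖ ≤ C ^ 2 * ‖Td (T (x p - x q))‖ := hbb2 _ h1
    have h3 : Td (T (x p - x q)) = zv p - zv q := by
      rw [map_sub, map_sub, hxeq, hxeq]
    rw [h3] at h2
    have h4 : ‖zv p - zv q‖ < ε / (C ^ 2 + 1) := by
      rw [← dist_eq_norm]; exact hN p hp q hq
    have h5 : (C ^ 2 + 1) * (ε / (C ^ 2 + 1)) = ε := by field_simp
    rw [dist_eq_norm]
    nlinarith [norm_nonneg (zv p - zv q), sq_nonneg C]
  obtain ⟨xl, hxl⟩ := cauchySeq_tendsto_of_complete hxc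
  refine ⟨T xl, ?_⟩
  have h1 : Tendsto (fun n => Td (T (x n))) atTop (𝓝 (Td (T xl))) :=
    ((Td.continuous.comp T.continuous).tendsto xl).comp hxl
  have h2 : Tendsto (fun n => Td (T (x n))) atTop (𝓝 z) := by
    refine hzl.congr fun n => (hxeq n).symm
  exact tendsto_nhds_unique h1 h2

lemma coker_findim_iff (T : H →L[ℂ] H) (hR : IsClosed (Set.range ⇑T)) :
    FiniteDimensional ℂ (H ⧸ LinearMap.range (T : H →ₗ[ℂ] H)) ↔
      FiniteDimensional ℂ ((LinearMap.range (T : H →ₗ[ℂ] H))ᗮ) := by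
  set R : Submodule ℂ H := LinearMap.range (T : H →ₗ[ℂ] H) with hRdef
  have hRc : IsClosed (R : Set H) := by
    rw [hRdef]
    exact (LinearMap.coe_range (T : H →ₗ[ℂ] H)) ▸ hR
  haveI : CompleteSpace R := hRc.completeSpace_coe
  have hcompl : IsCompl R Rᗮ := Submodule.isCompl_orthogonal_of_hasOrthogonalProjection
  have e : (H ⧸ R) ≃ₗ[ℂ] Rᗮ := Submodule.quotientEquivOfIsCompl R Rᗮ hcompl
  constructor
  · intro h
    exact Module.Finite.equiv e
  · intro h
    exact Module.Finite.equiv e.symm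

def GoodOp (T : H →L[ℂ] H) : Prop :=
  IsClosed (Set.range ⇑T) ∧
    (FiniteDimensional ℂ (LinearMap.ker (T : H →ₗ[ℂ] H)) ∨ FiniteDimensional ℂ (H ⧸ LinearMap.range (T : H →ₗ[ℂ] H)))

lemma goodOp_iff_seqP (T : H →L[ℂ] H) :
    GoodOp T ↔ (SeqP T ∨ SeqP (ContinuousLinearMap.adjoint T)) := by
  constructor
  · rintro ⟨hclosed, hfin | hfin⟩
    · exact Or.inl (seqP_of_closed_findim T hclosed hfin)
    · refine Or.inr (seqP_of_closed_findim _ (adjoint_closed_range T hclosed) ?_)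
      rw [ker_adjoint_eq]
      exact (coker_findim_iff T hclosed).1 hfin
  · rintro (hP | hP)
    · exact ⟨closed_range_of_seqP T hP, Or.inl (findim_ker_of_seqP T hP)⟩
    · have hclosedadj : IsClosed (Set.range ⇑(ContinuousLinearMap.adjoint T)) :=
        closed_range_of_seqP _ hP
      have hclosed : IsClosed (Set.range ⇑T) := by
        have := adjoint_closed_range (ContinuousLinearMap.adjoint T) hclosedadj
        rwa [ContinuousLinearMap.adjoint_adjoint] at this
      refine ⟨hclosed, Or.inr ?_⟩
      rw [coker_findim_iff T hclosed, ← ker_adjoint_eq]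
      exact findim_ker_of_seqP _ hP

lemma goodOp_stable (T T' : H →L[ℂ] H)
    (hc : IsCompactOperator ⇑(T - T'))
    (hc' : IsCompactOperator ⇑(ContinuousLinearMap.adjoint (T - T')))
    (h : GoodOp T) : GoodOp T' := by
  rw [goodOp_iff_seqP] at h ⊢
  have hK : IsCompactOperator ⇑(T' - T) := by
    have := hc.neg
    have heq : ⇑(T' - T) = -⇑(T - T') := by
      funext v; simp
    rw [heq]
    exact this
  have hK' : IsCompactOperator ⇑(ContinuousLinearMap.adjoint (T' - T)) := by
    have := hc'.neg
    have heq : ⇑(ContinuousLinearMap.adjoint (T' - T)) =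
        -⇑(ContinuousLinearMap.adjoint (T - T')) := by
      funext v
      have : ContinuousLinearMap.adjoint (T' - T) = -(ContinuousLinearMap.adjoint (T - T')) := by
        rw [← map_neg]; congr 1; abel
      rw [this]; simp
    rw [heq]
    exact this
  rcases h with hP | hP
  · left
    have := seqP_add_compact T (T' - T) hK hP
    rwa [add_sub_cancel] at this
  · right
    have := seqP_add_compact (ContinuousLinearMap.adjoint T)
      (ContinuousLinearMap.adjoint (T' - T)) hK' hP
    rwa [← map_add, add_sub_cancel] at this

lemma symbol_tendsto_zero (m m' : ℕ → ℂ) (hm : ∃ C : ℝ, ∀ n, ‖m n‖ ≤ C)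
    (j : ℕ) (l : Fin j → ℂ) (I : Fin j → Set ℕ)
    (hcover : (⋃ k, I k) = Set.univ)
    (hlim : ∀ k (l' : ℂ),
      (∃ n : ℕ → ℕ, StrictMono n ∧ (∀ i, n i ∈ I k) ∧
        Tendsto (m ∘ n) atTop (nhds l')) ↔ l' = l k)
    (hm' : ∀ k, ∀ n ∈ I k, m' n = l k) :
    Tendsto (fun n => m n - m' n) atTop (𝓝 0) := by
  classical
  by_contra hcon
  rw [Metric.tendsto_atTop] at hcon
  push_neg at hcon
  obtain ⟨ε, hε, hfr⟩ := hcon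
  set S : Set ℕ := {n | ε ≤ dist (m n - m' n) 0} with hS
  have hSinf : S.Infinite := by
    rw [← Nat.frequently_atTop_iff_infinite]
    rw [Filter.frequently_atTop]
    intro a
    obtain ⟨b, hb, hεb⟩ := hfr a
    exact ⟨b, hb, hεb⟩
  have hSk : ∃ k, (S ∩ I k).Infinite := by
    by_contra hfin
    push_neg at hfin
    have : S = ⋃ k, (S ∩ I k) := by
      rw [← Set.inter_iUnion, hcover, Set.inter_univ]
    rw [this] at hSinf
    exact hSinf (Set.finite_iUnion hfin)
  obtain ⟨k, hk⟩ := hSk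
  set p : ℕ → Prop := fun n => n ∈ S ∩ I k with hp
  have hpinf : (setOf p).Infinite := hk
  set f : ℕ → ℕ := Nat.nth p with hf
  have hfsm : StrictMono f := Nat.nth_strictMono hpinf
  have hfmem : ∀ i, p (f i) := fun i => Nat.nth_mem_of_infinite hpinf i
  obtain ⟨C, hC⟩ := hm
  have hmb : ∀ i, m (f i) ∈ closedBall (0:ℂ) C := fun i => by
    simpa [dist_zero_right] using hC (f i)
  obtain ⟨l', -, g, hgsm, hgl⟩ := tendsto_subseq_of_bounded isBounded_closedBall hmb
  have hcomp : ∃ n : ℕ → ℕ, StrictMono n ∧ (∀ i, n i ∈ I k) ∧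
      Tendsto (m ∘ n) atTop (nhds l') := by
    refine ⟨f ∘ g, hfsm.comp hgsm, fun i => (hfmem (g i)).2, ?_⟩
    exact hgl
  have hll : l' = l k := (hlim k l').1 hcomp
  subst hll
  -- but along this subsequence ‖m n - l k‖ ≥ ε
  obtain ⟨N, hN⟩ := Metric.tendsto_atTop.1 hgl ε hε
  have hi : dist (m (f (g N))) (l k) < ε := by simpa using hN N le_rfl
  have hmem := hfmem (g N)
  have h1 : m' (f (g N)) = l k := hm' k _ hmem.2
  have h2 : ε ≤ dist (m (f (g N)) - m' (f (g N))) 0 := hmem.1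
  rw [h1, dist_zero_right, ← dist_eq_norm] at h2
  exact absurd hi (not_lt.2 h2)

end Aux

/-- The essential spectrum of a bounded operator: `λ` such that `T - λI` has non-closed
range, or both its kernel and cokernel are infinite-dimensional. -/
def essSpectrum {H : Type*} [NormedAddCommGroup H] [NormedSpace ℂ H]
    (T : H →L[ℂ] H) : Set ℂ :=
  {lam : ℂ | ¬ IsClosed (Set.range ⇑(T - lam • ContinuousLinearMap.id ℂ H)) ∨
    (¬ FiniteDimensional ℂ (LinearMap.ker ((T - lam • ContinuousLinearMap.id ℂ H : H →L[ℂ] H) : H →ₗ[ℂ] H)) ∧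
     ¬ FiniteDimensional ℂ
        (H ⧸ LinearMap.range ((T - lam • ContinuousLinearMap.id ℂ H : H →L[ℂ] H) : H →ₗ[ℂ] H)))}


section B2
variable {H : Type*} [NormedAddCommGroup H] [InnerProductSpace ℂ H] [CompleteSpace H]

lemma mem_essSpectrum_iff (T : H →L[ℂ] H) (lam : ℂ) :
    lam ∈ essSpectrum T ↔ ¬ GoodOp (T - lam • ContinuousLinearMap.id ℂ H) := by
  simp only [essSpectrum, GoodOp, Set.mem_setOf_eq]
  tauto

end B2

/-- If the symbol `m` has finitely many limit points `l₁,…,l_j` (along a partition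
`I₁,…,I_j` of `ℕ`) and `m'` is the corresponding piecewise-constant symbol, then
`M_{m,φ,ψ} - M_{m',φ,ψ}` is compact and the essential spectra coincide. -/
theorem stmt9 {H : Type*} [NormedAddCommGroup H] [InnerProductSpace ℂ H] [CompleteSpace H]
    (φ ψ : ℕ → H)
    (hdual : (∃ A B : ℝ, 0 < A ∧ 0 < B ∧ ∀ f : H,
        Summable (fun n => ‖⟪φ n, f⟫_ℂ‖ ^ 2) ∧
        A * ‖f‖ ^ 2 ≤ ∑' n, ‖⟪φ n, f⟫_ℂ‖ ^ 2 ∧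
        ∑' n, ‖⟪φ n, f⟫_ℂ‖ ^ 2 ≤ B * ‖f‖ ^ 2) ∧
      (∃ A B : ℝ, 0 < A ∧ 0 < B ∧ ∀ f : H,
        Summable (fun n => ‖⟪ψ n, f⟫_ℂ‖ ^ 2) ∧
        A * ‖f‖ ^ 2 ≤ ∑' n, ‖⟪ψ n, f⟫_ℂ‖ ^ 2 ∧
        ∑' n, ‖⟪ψ n, f⟫_ℂ‖ ^ 2 ≤ B * ‖f‖ ^ 2) ∧
      ∀ f : H, HasSum (fun n => ⟪ψ n, f⟫_ℂ • φ n) f)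
    (m m' : ℕ → ℂ) (hm : ∃ C : ℝ, ∀ n, ‖m n‖ ≤ C)
    (j : ℕ) (hj : 0 < j) (l : Fin j → ℂ) (I : Fin j → Set ℕ)
    (hcover : (⋃ k, I k) = Set.univ)
    (hinf : ∀ k, (I k).Infinite)
    (hlim : ∀ k (l' : ℂ),
      (∃ n : ℕ → ℕ, StrictMono n ∧ (∀ i, n i ∈ I k) ∧
        Tendsto (m ∘ n) atTop (nhds l')) ↔ l' = l k)
    (hm' : ∀ k, ∀ n ∈ I k, m' n = l k)
    (M M' : H →L[ℂ] H)
    (hM : ∀ f : H, HasSum (fun n => m n • ⟪ψ n, f⟫_ℂ • φ n) (M f))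
    (hM' : ∀ f : H, HasSum (fun n => m' n • ⟪ψ n, f⟫_ℂ • φ n) (M' f)) :
    IsCompactOperator ⇑(M - M') ∧ essSpectrum M = essSpectrum M' := by
  classical
  obtain ⟨⟨Aφ, Bφ, hAφ, hBφ, hfφ⟩, ⟨Aψ, Bψ, hAψ, hBψ, hfψ⟩, hframe⟩ := hdual
  have hφ : ∀ f : H, Summable (fun n => ‖⟪φ n, f⟫_ℂ‖ ^ 2) ∧
      ∑' n, ‖⟪φ n, f⟫_ℂ‖ ^ 2 ≤ Bφ * ‖f‖ ^ 2 := fun f => ⟨(hfφ f).1, (hfφ f).2.2⟩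
  have hψ : ∀ f : H, Summable (fun n => ‖⟪ψ n, f⟫_ℂ‖ ^ 2) ∧
      ∑' n, ‖⟪ψ n, f⟫_ℂ‖ ^ 2 ≤ Bψ * ‖f‖ ^ 2 := fun f => ⟨(hfψ f).1, (hfψ f).2.2⟩
  set c : ℕ → ℂ := fun n => m n - m' n with hcdef
  have hc : Tendsto c atTop (𝓝 0) := symbol_tendsto_zero m m' hm j l I hcover hlim hm'
  obtain ⟨Cm, hCm⟩ := hm
  -- bound on c
  have hcbdd : ∃ Cc : ℝ, ∀ n, ‖c n‖ ≤ Cc := by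
    refine ⟨Cm + ∑ k : Fin j, ‖l k‖, fun n => ?_⟩
    have hn : n ∈ ⋃ k, I k := hcover ▸ Set.mem_univ n
    obtain ⟨k, hk⟩ := Set.mem_iUnion.1 hn
    have h1 : ‖m' n‖ = ‖l k‖ := by rw [hm' k n hk]
    have h2 : ‖l k‖ ≤ ∑ k : Fin j, ‖l k‖ :=
      Finset.single_le_sum (f := fun k => ‖l k‖) (fun _ _ => norm_nonneg _)
        (Finset.mem_univ k)
    calc ‖c n‖ ≤ ‖m n‖ + ‖m' n‖ := norm_sub_le _ _
      _ ≤ Cm + ∑ k : Fin j, ‖l k‖ := add_le_add (hCm n) (h1 ▸ h2)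
  obtain ⟨Cc, hCc⟩ := hcbdd
  have hCc0 : 0 ≤ Cc := le_trans (norm_nonneg _) (hCc 0)
  set D : H →L[ℂ] H := M - M' with hDdef
  have hDsum : ∀ f : H, HasSum (fun n => c n • ⟪ψ n, f⟫_ℂ • φ n) (D f) := by
    intro f
    have h1 := (hM f).sub (hM' f)
    have h2 : (fun n => m n • ⟪ψ n, f⟫_ℂ • φ n - m' n • ⟪ψ n, f⟫_ℂ • φ n) =
        fun n => c n • ⟪ψ n, f⟫_ℂ • φ n := by
      funext n
      rw [hcdef, ← sub_smul]
    rw [h2] at h1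
    simpa [hDdef] using h1
  have hDcpt : IsCompactOperator ⇑D :=
    multiplier_compact φ ψ Bφ Bψ hBφ.le hBψ.le hφ hψ c hc D hDsum
  -- the adjoint of D is also a frame multiplier, with symbol `conj ∘ c`
  set c' : ℕ → ℂ := fun n => (starRingEnd ℂ) (c n) with hc'def
  have hc' : Tendsto c' atTop (𝓝 0) := by
    have h1 : Tendsto (fun z : ℂ => (starRingEnd ℂ) z) (𝓝 0) (𝓝 ((starRingEnd ℂ) 0)) :=
      (continuous_star : Continuous (star : ℂ → ℂ)).tendsto 0
    rw [map_zero] at h1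
    exact h1.comp hc
  set Dadj := ContinuousLinearMap.adjoint D with hDadjdef
  have hDadjsum : ∀ gv : H, HasSum (fun n => c' n • ⟪φ n, gv⟫_ℂ • ψ n) (Dadj gv) := by
    intro gv
    set a' : ℕ → ℂ := fun n => c' n * ⟪φ n, gv⟫_ℂ with ha'def
    have hsum2 : Summable (fun n => ‖a' n‖ ^ 2) := by
      refine Summable.of_nonneg_of_le (fun n => by positivity) (fun n => ?_)
        (((hφ gv).1).mul_left (Cc ^ 2))
      rw [ha'def]
      simp only [norm_mul, mul_pow]
      have h1 : ‖c' n‖ ≤ Cc := by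
        rw [hc'def]
        simpa using hCc n
      have h2 : ‖c' n‖ ^ 2 ≤ Cc ^ 2 := pow_le_pow_left₀ (norm_nonneg _) h1 2
      exact mul_le_mul_of_nonneg_right h2 (by positivity)
    have hsummΨ : Summable (fun n => a' n • ψ n) :=
      synth_summable ψ Bψ hBψ.le hψ a' hsum2
    obtain ⟨S, hS⟩ := hsummΨ
    have hkey : S = Dadj gv := by
      refine ext_inner_left ℂ fun v => ?_
      have hv1 : HasSum (fun n => ⟪v, a' n • ψ n⟫_ℂ) ⟪v, S⟫_ℂ :=
        (innerSL ℂ v).hasSum hS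
      have hv2 : HasSum (fun n => (starRingEnd ℂ) ⟪gv, c n • ⟪ψ n, v⟫_ℂ • φ n⟫_ℂ)
          ((starRingEnd ℂ) ⟪gv, D v⟫_ℂ) := ((innerSL ℂ gv).hasSum (hDsum v)).star
      have hfun : (fun n => (starRingEnd ℂ) ⟪gv, c n • ⟪ψ n, v⟫_ℂ • φ n⟫_ℂ) =
          fun n => ⟪v, a' n • ψ n⟫_ℂ := by
        funext n
        rw [inner_smul_right, inner_smul_right, inner_smul_right]
        rw [ha'def]
        simp only [map_mul, hc'def]
        rw [inner_conj_symm, inner_conj_symm]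
        ring
      have hval : (starRingEnd ℂ) ⟪gv, D v⟫_ℂ = ⟪v, Dadj gv⟫_ℂ := by
        rw [inner_conj_symm, hDadjdef, ContinuousLinearMap.adjoint_inner_right]
      rw [hfun, hval] at hv2
      exact hv1.unique hv2
    rw [hkey] at hS
    refine hS.congr_fun fun n => ?_
    rw [ha'def, smul_smul]
  have hDadjcpt : IsCompactOperator ⇑Dadj :=
    multiplier_compact ψ φ Bψ Bφ hBψ.le hBφ.le hψ hφ c' hc' Dadj hDadjsum
  refine ⟨hDcpt, ?_⟩
  -- essential spectra coincide
  ext lam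
  rw [mem_essSpectrum_iff, mem_essSpectrum_iff]
  have hdiff : (M - lam • ContinuousLinearMap.id ℂ H) -
      (M' - lam • ContinuousLinearMap.id ℂ H) = D := by
    rw [hDdef]; abel
  have hdiff' : (M' - lam • ContinuousLinearMap.id ℂ H) -
      (M - lam • ContinuousLinearMap.id ℂ H) = -D := by
    rw [hDdef]; abel
  have hnegcpt : IsCompactOperator ⇑(-D) := by
    have := hDcpt.neg
    have heq : ⇑(-D) = -⇑D := by funext v; simp
    rw [heq]; exact this
  have hnegadjcpt : IsCompactOperator ⇑(ContinuousLinearMap.adjoint (-D)) := by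
    have := hDadjcpt.neg
    have heq : ⇑(ContinuousLinearMap.adjoint (-D)) = -⇑Dadj := by
      have h1 : ContinuousLinearMap.adjoint (-D) = -Dadj := by
        rw [hDadjdef, ← map_neg]
      rw [h1]; funext v; simp
    rw [heq]; exact this
  constructor
  · intro h hgood
    exact h (goodOp_stable _ _ (hdiff' ▸ hnegcpt) (hdiff' ▸ hnegadjcpt) hgood)
  · intro h hgood
    exact h (goodOp_stable _ _ (hdiff ▸ hDcpt) (hdiff ▸ hDadjcpt) hgood)
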